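/- Let c = min{pq, p - pq} with p > 0 and 0 < q < 1, and let ν > 0. Consider the ODE dz/dt = (N/p)·z·(z+pq)·(z+pq-p) ± ν·(N/p)·ρ·(z+pq)·(z+pq-p) (with either fixed sign), where N > 0 and |ρ| ≤ c/ν. If z is a solution with |z(0)| ≤ c, then |z(t)| ≤ c for all t ≥ 0. -/

import Mathlib

/-!
With `a = s ν ρ` the right-hand side is `F z = (N/p) (z + a) (z + pq) (z + pq - p)`, and
`|a| ≤ c` together with `c ≤ pq`, `c ≤ p - pq` fixes the signs of the three factors at `±c`:
`F c ≤ 0 ≤ F (-c)`. As `F` is differentiable at `c`, just right of `c` it is bounded by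
`K (x - c)`, so no solution starting below `c` can cross the barrier `c + η exp (r (t - T))`
with `r > K`; letting `η → 0` keeps `z` below `c`, and symmetrically above `-c`.
-/

open Filter Set Topology

theorem HasDerivAt.eventually_nhdsGT_le {F : ℝ → ℝ} {F' c : ℝ} (hF : HasDerivAt F F' c) :
    ∀ᶠ x in 𝓝[>] c, F x ≤ F c + (F' + 1) * (x - c) := by
  filter_upwards [nhdsWithin_le_nhds (hF.isLittleO.def one_pos), self_mem_nhdsWithin]
    with x hx hcx
  have hxc : 0 < x - c := sub_pos.mpr hcx
  rw [Real.norm_eq_abs, Real.norm_eq_abs, abs_of_pos hxc, smul_eq_mul] at hx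
  linarith [le_abs_self (F x - F c - (x - c) * F')]

theorem le_of_hasDerivAt_of_eventually_le {F z : ℝ → ℝ} {c K : ℝ}
    (hF : ∀ᶠ x in 𝓝[>] c, F x ≤ K * (x - c))
    (hz : ∀ t, 0 ≤ t → HasDerivAt z (F (z t)) t) (h0 : z 0 ≤ c) {T : ℝ} (hT : 0 ≤ T) :
    z T ≤ c := by
  obtain ⟨u, hcu, hu⟩ := mem_nhdsGT_iff_exists_Ioo_subset.mp hF
  by_contra! hzT
  set η := min ((z T - c) / 2) ((u - c) / 2)
  have hη : 0 < η := lt_min (by linarith) (by linarith [mem_Ioi.mp hcu])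
  set r := |K| + 1
  set B : ℝ → ℝ := fun t => c + η * Real.exp (r * (t - T))
  have hB : ∀ t, HasDerivAt B (η * (Real.exp (r * (t - T)) * r)) t := fun t =>
    ((((hasDerivAt_id t).sub_const T).const_mul r).exp.const_mul η).const_add c |>.congr_deriv
      (by simp only [id]; ring)
  have hle := image_le_of_deriv_right_lt_deriv_boundary (f := z) (a := 0) (b := T)
    (fun t ht => (hz t ht.1).continuousAt.continuousWithinAt)
    (fun t ht => (hz t ht.1).hasDerivWithinAt)
    (by simp only [B]; nlinarith [Real.exp_pos (r * (0 - T))]) hB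
    (fun t ht hzB => ?_) ⟨hT, le_rfl⟩
  · simp only [B, sub_self, mul_zero, Real.exp_zero, mul_one] at hle
    linarith [min_le_left ((z T - c) / 2) ((u - c) / 2)]
  · have hexp_pos := Real.exp_pos (r * (t - T))
    have hexp_le : Real.exp (r * (t - T)) ≤ 1 :=
      Real.exp_le_one_iff.mpr (mul_nonpos_of_nonneg_of_nonpos (by positivity) (by linarith [ht.2]))
    have hBu : B t ∈ Ioo c u := by
      constructor
      · simp only [B]; nlinarith
      · simp only [B]; nlinarith [min_le_right ((z T - c) / 2) ((u - c) / 2)]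
    rw [hzB]
    calc F (B t) ≤ K * (B t - c) := hu hBu
      _ = K * (η * Real.exp (r * (t - T))) := by simp only [B]; ring
      _ < r * (η * Real.exp (r * (t - T))) := by
          gcongr; linarith [le_abs_self K]
      _ = η * (Real.exp (r * (t - T)) * r) := by ring

theorem le_of_hasDerivAt_of_apply_nonpos {F z : ℝ → ℝ} {c : ℝ} (hF : DifferentiableAt ℝ F c)
    (hFc : F c ≤ 0) (hz : ∀ t, 0 ≤ t → HasDerivAt z (F (z t)) t) (h0 : z 0 ≤ c) :
    ∀ t, 0 ≤ t → z t ≤ c := fun _ ht =>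
  le_of_hasDerivAt_of_eventually_le (K := deriv F c + 1)
    (hF.hasDerivAt.eventually_nhdsGT_le.mono fun _ hx => by linarith) hz h0 ht

theorem le_of_hasDerivAt_of_apply_nonneg {F z : ℝ → ℝ} {c : ℝ} (hF : DifferentiableAt ℝ F c)
    (hFc : 0 ≤ F c) (hz : ∀ t, 0 ≤ t → HasDerivAt z (F (z t)) t) (h0 : c ≤ z 0) :
    ∀ t, 0 ≤ t → c ≤ z t := by
  have hneg := le_of_hasDerivAt_of_apply_nonpos (F := fun x => -F (-x)) (z := fun t => -z t)
    (c := -c) (differentiableAt_comp_neg.mpr (by rwa [neg_neg])).neg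
    (by simpa using hFc) (fun t ht => by simpa using (hz t ht).fun_neg) (neg_le_neg h0)
  exact fun t ht => neg_le_neg_iff.mp (hneg t ht)

theorem cubic_nonpos_at_right {N p q a c : ℝ} (hNp : 0 ≤ N / p) (ha : |a| ≤ c)
    (hcq : c ≤ p * q) (hcq' : c ≤ p - p * q) :
    N / p * (c + a) * (c + p * q) * (c + p * q - p) ≤ 0 := by
  obtain ⟨ha₁, ha₂⟩ := abs_le.mp ha
  exact mul_nonpos_of_nonneg_of_nonpos
    (mul_nonneg (mul_nonneg hNp (by linarith)) (by linarith)) (by linarith)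

theorem cubic_nonneg_at_left {N p q a c : ℝ} (hNp : 0 ≤ N / p) (ha : |a| ≤ c)
    (hcq : c ≤ p * q) (hcq' : c ≤ p - p * q) :
    0 ≤ N / p * (-c + a) * (-c + p * q) * (-c + p * q - p) := by
  obtain ⟨ha₁, ha₂⟩ := abs_le.mp ha
  exact mul_nonneg_of_nonpos_of_nonpos
    (mul_nonpos_of_nonpos_of_nonneg (mul_nonpos_of_nonneg_of_nonpos hNp (by linarith))
      (by linarith)) (by linarith)

theorem stmt_0_general (p q N ν ρ : ℝ) (hp : 0 < p)
    (hN : 0 < N) (hν : 0 < ν) (s : ℝ) (hs : s = 1 ∨ s = -1)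
    (c : ℝ) (hc : c = min (p * q) (p - p * q))
    (hρ : |ρ| ≤ c / ν)
    (z : ℝ → ℝ)
    (hz : ∀ t, 0 ≤ t → HasDerivAt z
      (N / p * z t * (z t + p * q) * (z t + p * q - p)
        + s * ν * (N / p) * ρ * (z t + p * q) * (z t + p * q - p)) t)
    (h0 : |z 0| ≤ c) :
    ∀ t, 0 ≤ t → |z t| ≤ c := by
  set a := s * ν * ρ
  have ha : |a| ≤ c := by
    have hs_abs : |s| = 1 := by rcases hs with rfl | rfl <;> simp
    calc |a| = ν * |ρ| := by simp only [a, abs_mul, hs_abs, abs_of_pos hν, one_mul]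
      _ ≤ ν * (c / ν) := by gcongr
      _ = c := mul_div_cancel₀ c hν.ne'
  set F : ℝ → ℝ := fun x => N / p * (x + a) * (x + p * q) * (x + p * q - p)
  have hF : Differentiable ℝ F := by fun_prop
  have hzF : ∀ t, 0 ≤ t → HasDerivAt z (F (z t)) t := fun t ht =>
    (hz t ht).congr_deriv (by simp only [F, a]; ring)
  have hNp : 0 ≤ N / p := by positivity
  have hcq : c ≤ p * q := hc ▸ min_le_left _ _
  have hcq' : c ≤ p - p * q := hc ▸ min_le_right _ _
  obtain ⟨h0₁, h0₂⟩ := abs_le.mp h0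
  exact fun t ht => abs_le.mpr
    ⟨le_of_hasDerivAt_of_apply_nonneg (hF _) (cubic_nonneg_at_left hNp ha hcq hcq') hzF h0₁ t ht,
      le_of_hasDerivAt_of_apply_nonpos (hF _) (cubic_nonpos_at_right hNp ha hcq hcq') hzF h0₂ t ht⟩

/-- Forward invariance of `[-c, c]` for the cubic chemotaxis ODE
`dz/dt = (N/p) z (z+pq)(z+pq-p) ± ν (N/p) ρ (z+pq)(z+pq-p)`
under the shallow-gradient condition `|ρ| ≤ c/ν`. -/
theorem stmt_0 (p q N ν ρ : ℝ) (hp : 0 < p) (hq : 0 < q) (hq1 : q < 1)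
    (hN : 0 < N) (hν : 0 < ν) (s : ℝ) (hs : s = 1 ∨ s = -1)
    (c : ℝ) (hc : c = min (p * q) (p - p * q))
    (hρ : |ρ| ≤ c / ν)
    (z : ℝ → ℝ)
    (hz : ∀ t, 0 ≤ t → HasDerivAt z
      (N / p * z t * (z t + p * q) * (z t + p * q - p)
        + s * ν * (N / p) * ρ * (z t + p * q) * (z t + p * q - p)) t)
    (h0 : |z 0| ≤ c) :
    ∀ t, 0 ≤ t → |z t| ≤ c :=
  stmt_0_general p q N ν ρ hp hN hν s hs c hc hρ z hz h0
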